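/- Let n be a natural number with n ≥ 3 and let g, h be real numbers with 1/3 < h, h < g, g < 1/2, and g > (n² − n) · (1 − 2h). Consider the flow index type ι = Fin 2 ⊕ Fin n ⊕ Fin (n−1) with bandwidths b assigning h to the type-A flows (Fin 2), g/n to the type-B flows (Fin n), and g/(n−1) to the type-C flows (Fin (n−1)), and let r₀ : ι → Fin 2 be the assignment placing the first type-A flow and all type-C flows on edge 0, and the second type-A flow and all type-B flows on edge 1. Then: (a) r₀ is feasible (each edge load is h + g ≤ 1); (b) for every edge e, the extension of r₀ by a new flow of bandwidth 1 − 2h placed on e is not feasible; and (c) every assignment r' : ι → Fin 2 differing from r₀ at exactly one index is not feasible, i.e., r₀ admits no feasibility-preserving single-flow reroute. -/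

import Mathlib

/-!
In `r₀` both edges carry `h + g`, so each has residual capacity `1 - h - g`. A new flow of
bandwidth `1 - 2h` does not fit since `g > h`. Nor does any existing flow fit on the other edge:
a type-A flow because `2h + g > 1`, and a type-B or type-C flow because its bandwidth is at least
`g / (n² - n) > 1 - 2h > 1 - h - g`.
-/

open Finset

/-- The load on edge `e`: the sum of the bandwidths of the flows assigned to `e`. -/
noncomputable def load {ι : Type*} [Fintype ι] {m : ℕ} (b : ι → ℝ) (r : ι → Fin m)
    (e : Fin m) : ℝ :=
  ∑ i ∈ univ.filter (fun i => r i = e), b i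

/-- An assignment is feasible if the load of every edge is at most the capacity 1. -/
def Feasible {ι : Type*} [Fintype ι] {m : ℕ} (b : ι → ℝ) (r : ι → Fin m) : Prop :=
  ∀ e, load b r e ≤ 1

theorem eq_update_of_forall_ne_imp {ι α : Type*} [DecidableEq ι] {r r' : ι → α} {i : ι}
    (hi : ∀ j, r' j ≠ r j → j = i) : r' = Function.update r i (r' i) := by
  funext j
  by_cases hj : j = i
  · subst hj; simp
  · rw [Function.update_of_ne hj]
    exact not_not.mp (mt (hi j) hj)

section Load

variable {ι κ : Type*} [Fintype ι] [Fintype κ] {m : ℕ}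

theorem load_eq_sum_ite (b : ι → ℝ) (r : ι → Fin m) (e : Fin m) :
    load b r e = ∑ i, if r i = e then b i else 0 := by
  rw [load, sum_filter]

theorem load_sumElim (b : ι → ℝ) (c : κ → ℝ) (r : ι → Fin m) (s : κ → Fin m) (e : Fin m) :
    load (Sum.elim b c) (Sum.elim r s) e = load b r e + load c s e := by
  simp only [load_eq_sum_ite, Fintype.sum_sum_type, Sum.elim_inl, Sum.elim_inr]
  rfl

theorem load_const_self (b : ι → ℝ) (e : Fin m) : load b (fun _ => e) e = ∑ i, b i := by
  simp [load_eq_sum_ite]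

theorem load_const_of_ne (b : ι → ℝ) {e e' : Fin m} (h : e' ≠ e) :
    load b (fun _ => e') e = 0 := by
  simp [load_eq_sum_ite, h]

theorem load_update_self [DecidableEq ι] (b : ι → ℝ) (r : ι → Fin m) {i : ι} {e : Fin m}
    (he : r i ≠ e) : load b (Function.update r i e) e = load b r e + b i := by
  simp only [load_eq_sum_ite, Fintype.sum_eq_add_sum_compl i, Function.update_self,
    if_neg he, zero_add]
  rw [add_comm]
  congr 1
  refine sum_congr rfl fun j hj => ?_
  rw [Function.update_of_ne (by simpa using hj)]

theorem not_feasible_sumElim_const_right (b : ι → ℝ) (c : κ → ℝ) (r : ι → Fin m) (e : Fin m)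
    (hover : 1 < load b r e + ∑ k, c k) : ¬ Feasible (Sum.elim b c) (Sum.elim r fun _ => e) :=
  fun hF => (hF e).not_gt <| by rwa [load_sumElim, load_const_self]

theorem not_feasible_of_existsUnique_ne {b : ι → ℝ} {r r' : ι → Fin m} {L : ℝ}
    (hload : ∀ e, load b r e = L) (hb : ∀ i, 1 - L < b i) (hr' : ∃! i, r' i ≠ r i) :
    ¬ Feasible b r' := by
  classical
  obtain ⟨i, hne, huniq⟩ := hr'
  rw [eq_update_of_forall_ne_imp huniq]
  intro hF
  have hover := hF (r' i)
  rw [load_update_self b r hne.symm, hload] at hover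
  linarith [hb i]

end Load

noncomputable def gadgetBandwidth (n : ℕ) (h g : ℝ) : Fin 2 ⊕ Fin n ⊕ Fin (n - 1) → ℝ :=
  Sum.elim (fun _ : Fin 2 => h)
    (Sum.elim (fun _ : Fin n => g / (n : ℝ)) (fun _ : Fin (n - 1) => g / ((n : ℝ) - 1)))

def gadgetRouting (n : ℕ) : Fin 2 ⊕ Fin n ⊕ Fin (n - 1) → Fin 2 :=
  Sum.elim (fun a : Fin 2 => if a = 0 then (0 : Fin 2) else 1)
    (Sum.elim (fun _ : Fin n => (1 : Fin 2)) (fun _ : Fin (n - 1) => (0 : Fin 2)))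

theorem load_gadgetRouting {n : ℕ} (hn : 2 ≤ n) (h g : ℝ) (e : Fin 2) :
    load (gadgetBandwidth n h g) (gadgetRouting n) e = h + g := by
  have hn0 : (n : ℝ) ≠ 0 := by positivity
  have hn1 : ((n - 1 : ℕ) : ℝ) = n - 1 := by push_cast [show 1 ≤ n by omega]; ring
  have hn1' : (n : ℝ) - 1 ≠ 0 := by rw [← hn1]; exact_mod_cast (by omega : n - 1 ≠ 0)
  have hA : load (fun _ : Fin 2 => h) (fun a => if a = 0 then 0 else 1) e = h := by
    fin_cases e <;> simp [load_eq_sum_ite, Fin.sum_univ_two]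
  simp only [gadgetBandwidth, gadgetRouting, load_sumElim, hA]
  fin_cases e <;> simp [load_const_self, load_const_of_ne, hn1, mul_div_cancel₀, hn0, hn1']

theorem one_sub_add_lt_gadgetBandwidth {n : ℕ} {h g : ℝ} (hn : 2 ≤ n) (hh : 1/3 < h)
    (hhg : h < g) (hg : g < 1/2) (hgn : g > ((n : ℝ)^2 - n) * (1 - 2*h))
    (i : Fin 2 ⊕ Fin n ⊕ Fin (n - 1)) : 1 - (h + g) < gadgetBandwidth n h g i := by
  have hn2 : (2 : ℝ) ≤ n := by exact_mod_cast hn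
  have hsmall : ∀ d : ℝ, 0 < d → d ≤ (n : ℝ)^2 - n → 1 - (h + g) < g / d := by
    intro d hd hdle
    rw [lt_div_iff₀ hd]
    calc (1 - (h + g)) * d < (1 - 2 * h) * d := by gcongr; linarith
      _ ≤ (1 - 2 * h) * ((n : ℝ)^2 - n) := by gcongr; linarith
      _ < g := by linarith
  rcases i with a | i | i
  · simp only [gadgetBandwidth, Sum.elim_inl]; linarith
  · exact hsmall n (by linarith) (by nlinarith)
  · exact hsmall (n - 1) (by linarith) (by nlinarith)

theorem stmt16 (n : ℕ) (hn : 3 ≤ n) (g h : ℝ)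
    (hh : 1/3 < h) (hhg : h < g) (hg : g < 1/2)
    (hgn : g > ((n : ℝ)^2 - n) * (1 - 2*h))
    (b : Fin 2 ⊕ Fin n ⊕ Fin (n - 1) → ℝ)
    (hb : b = Sum.elim (fun _ : Fin 2 => h)
      (Sum.elim (fun _ : Fin n => g / (n : ℝ)) (fun _ : Fin (n - 1) => g / ((n : ℝ) - 1))))
    (r₀ : Fin 2 ⊕ Fin n ⊕ Fin (n - 1) → Fin 2)
    (hr₀ : r₀ = Sum.elim (fun a : Fin 2 => if a = 0 then (0 : Fin 2) else 1)
      (Sum.elim (fun _ : Fin n => (1 : Fin 2)) (fun _ : Fin (n - 1) => (0 : Fin 2)))) :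
    -- (a) `r₀` is feasible: each edge load is `h + g ≤ 1`
    (Feasible b r₀ ∧ ∀ e : Fin 2, load b r₀ e = h + g) ∧
    -- (b) placing a new flow of bandwidth `1 - 2h` on either edge is infeasible
    (∀ e : Fin 2,
      ¬ Feasible (Sum.elim b (fun _ : Fin 1 => 1 - 2*h)) (Sum.elim r₀ (fun _ : Fin 1 => e))) ∧
    -- (c) `r₀` admits no feasibility-preserving single-flow reroute
    (∀ r' : Fin 2 ⊕ Fin n ⊕ Fin (n - 1) → Fin 2, (∃! i, r' i ≠ r₀ i) →
      ¬ Feasible b r') := by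
  obtain rfl : b = gadgetBandwidth n h g := hb
  obtain rfl : r₀ = gadgetRouting n := hr₀
  have hload := load_gadgetRouting (by omega : 2 ≤ n) h g
  refine ⟨⟨fun e => (hload e).trans_le (by linarith), hload⟩, fun e => ?_, fun r' hr' => ?_⟩
  · exact not_feasible_sumElim_const_right _ _ _ e (by simp [hload e]; linarith)
  · exact not_feasible_of_existsUnique_ne hload
      (one_sub_add_lt_gadgetBandwidth (by omega) hh hhg hg hgn) hr'
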